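/- arXiv:2007.07065 — 2 statements merged into one kernel-verified Lean document; each statement's English description precedes it below -/
import Mathlib

section
/- Suppose the density of W for w > w₀ equals f(w) = (ξσ)^{-1}(w/σ)^{-1/ξ-1}(1 + h(w)) with |h(w)| ≤ C w^{-δ/ξ} for some δ > 0 and 0 < ξ < 1/2. With m(w) = E[W 1[W>w]]/F(w) and m*(w) = σ^{1/ξ} w^{1-1/ξ}/(1-ξ), there is a constant C' such that |m(w) - m*(w)| ≤ C'(w^{1-(1+δ)/ξ} + w^{1-2/ξ}) uniformly in w > w₀. -/
/-!
On `(w₀, ∞)` the law of `W` has a density within `C K s^(-(1+δ)/ξ-1)` of the Pareto density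
`K s^(-1/ξ-1)`, `K = σ^(1/ξ)/ξ`. Integrating `s` against these two densities over `(w, ∞)` gives
`E[W; W > w] = m*(w) + O(w^(1-(1+δ)/ξ))`, and integrating `1` gives `1 - F(w) = O(w^(-1/ξ))`.
Since `m(w) - m*(w) = ((E[W; W > w] - m*(w)) + m*(w) (1 - F(w))) / F(w)` with
`F(w) ≥ F(w₀) > 0`, the two errors add up to the claimed bound.
-/

open MeasureTheory Filter Set

namespace MeasureTheory

variable {α : Type*} [MeasurableSpace α] {μ : Measure α}

theorem integral_withDensity_ofReal {q : α → ℝ} (hq : Measurable q) (g : α → ℝ) :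
    ∫ x, g x ∂μ.withDensity (fun x => ENNReal.ofReal (q x)) = ∫ x, max (q x) 0 * g x ∂μ :=
  integral_withDensity_eq_integral_smul (f := fun x => (q x).toNNReal) hq.real_toNNReal g

theorem integrable_withDensity_ofReal_iff {q : α → ℝ} (hq : Measurable q) {g : α → ℝ} :
    Integrable g (μ.withDensity fun x => ENNReal.ofReal (q x)) ↔
      Integrable (fun x => max (q x) 0 * g x) μ :=
  integrable_withDensity_iff_integrable_smul (f := fun x => (q x).toNNReal) hq.real_toNNReal

theorem restrict_eq_withDensity_of_subset {ν : Measure α} {s t : Set α} {f : α → ENNReal}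
    (h : ν.restrict s = (μ.restrict s).withDensity f) (hts : t ⊆ s) (ht : MeasurableSet t) :
    ν.restrict t = (μ.restrict t).withDensity f := by
  rw [← Measure.restrict_restrict_of_subset hts, h, restrict_withDensity ht,
    Measure.restrict_restrict_of_subset hts]

/-- `f` need not be measurable: `μ.withDensity f` is only compared with the measures of
density `p ± e`. -/
theorem abs_integral_withDensity_sub_le {f p e g : α → ℝ} (hp : Measurable p)
    (he : Measurable e) (hfp : ∀ᵐ x ∂μ, |f x - p x| ≤ e x) (hp0 : ∀ᵐ x ∂μ, 0 ≤ p x)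
    (hg0 : ∀ᵐ x ∂μ, 0 ≤ g x) (hpg : Integrable (fun x => p x * g x) μ)
    (heg : Integrable (fun x => e x * g x) μ) :
    |∫ x, g x ∂μ.withDensity (fun x => ENNReal.ofReal (f x)) - ∫ x, p x * g x ∂μ|
      ≤ ∫ x, e x * g x ∂μ := by
  set ρ := μ.withDensity fun x => ENNReal.ofReal (f x)
  set ρup := μ.withDensity fun x => ENNReal.ofReal (p x + e x) with hρup
  set ρlow := μ.withDensity fun x => ENNReal.ofReal (p x - e x) with hρlow
  have hup : ρ ≤ ρup := withDensity_mono <| hfp.mono fun x hx =>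
    ENNReal.ofReal_le_ofReal (by linarith [(abs_le.mp hx).2])
  have hlow : ρlow ≤ ρ := withDensity_mono <| hfp.mono fun x hx =>
    ENNReal.ofReal_le_ofReal (by linarith [(abs_le.mp hx).1])
  have hup_eq : (fun x => max (p x + e x) 0 * g x) =ᵐ[μ] fun x => p x * g x + e x * g x := by
    filter_upwards [hfp, hp0] with x hx hx0
    rw [max_eq_left (by linarith [abs_nonneg (f x - p x)]), add_mul]
  have hint_up : Integrable g ρup :=
    (integrable_withDensity_ofReal_iff (hp.add he)).mpr ((hpg.add heg).congr hup_eq.symm)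
  have hint_low : Integrable (fun x => max (p x - e x) 0 * g x) μ :=
    (integrable_withDensity_ofReal_iff (hp.sub he)).mp (hint_up.mono_measure (hlow.trans hup))
  have hg0' : ∀ {ν : Measure α}, ν ≪ μ → 0 ≤ᵐ[ν] g := fun h => h.ae_le hg0
  refine abs_sub_le_iff.mpr ⟨?_, ?_⟩
  · calc ∫ x, g x ∂ρ - ∫ x, p x * g x ∂μ
        ≤ ∫ x, g x ∂ρup - ∫ x, p x * g x ∂μ := sub_le_sub_right (integral_mono_measure hup
          (hg0' (withDensity_absolutelyContinuous _ _)) hint_up) _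
      _ = ∫ x, e x * g x ∂μ := by
          rw [hρup, integral_withDensity_ofReal (q := fun x => p x + e x) (hp.add he),
            integral_congr_ae hup_eq, integral_add hpg heg]
          ring
  · calc ∫ x, p x * g x ∂μ - ∫ x, g x ∂ρ
        ≤ ∫ x, p x * g x ∂μ - ∫ x, g x ∂ρlow := sub_le_sub_left (integral_mono_measure hlow
          (hg0' (withDensity_absolutelyContinuous _ _)) (hint_up.mono_measure hup)) _
      _ ≤ ∫ x, p x * g x ∂μ - ∫ x, (p x - e x) * g x ∂μ := by
          rw [hρlow, integral_withDensity_ofReal (q := fun x => p x - e x) (hp.sub he)]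
          refine sub_le_sub_left (integral_mono_ae ?_ hint_low ?_) _
          · simp only [sub_mul]; exact hpg.sub heg
          · filter_upwards [hg0] with x hx
            exact mul_le_mul_of_nonneg_right (le_max_left _ _) hx
      _ = ∫ x, e x * g x ∂μ := by
          simp only [sub_mul]
          rw [integral_sub hpg heg]
          ring

end MeasureTheory

/-- With `K = a σ^a` this is the Pareto density of index `a` and scale `σ`. -/
noncomputable def powerLawDensity (K a s : ℝ) : ℝ := K * s ^ (-a - 1)

section PowerLaw

variable {K a w : ℝ}

@[fun_prop]
theorem measurable_powerLawDensity : Measurable (powerLawDensity K a) := by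
  unfold powerLawDensity; fun_prop

theorem powerLawDensity_nonneg (hK : 0 ≤ K) {s : ℝ} (hs : 0 ≤ s) : 0 ≤ powerLawDensity K a s :=
  mul_nonneg hK (Real.rpow_nonneg hs _)

theorem powerLawDensity_mul_rpow_neg {s : ℝ} (hs : 0 < s) (b : ℝ) :
    powerLawDensity K a s * s ^ (-b) = powerLawDensity K (a + b) s := by
  rw [powerLawDensity, powerLawDensity, mul_assoc, ← Real.rpow_add hs]
  ring_nf

theorem integrableOn_powerLawDensity (ha : 0 < a) (hw : 0 < w) :
    IntegrableOn (powerLawDensity K a) (Ioi w) :=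
  (integrableOn_Ioi_rpow_of_lt (by linarith) hw).const_mul K

theorem integral_powerLawDensity (ha : 0 < a) (hw : 0 < w) :
    ∫ s in Ioi w, powerLawDensity K a s = K * w ^ (-a) / a := by
  simp only [powerLawDensity]
  rw [integral_const_mul, integral_Ioi_rpow_of_lt (by linarith) hw, sub_add_cancel]
  field_simp

theorem powerLawDensity_mul_self_eqOn (hw : 0 < w) :
    EqOn (fun s => powerLawDensity K a s * s) (powerLawDensity K (a - 1)) (Ioi w) := by
  intro s hs
  simp only [powerLawDensity, mul_assoc]
  rw [← Real.rpow_add_one (hw.trans hs).ne']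
  ring_nf

theorem integrableOn_powerLawDensity_mul_self (ha : 1 < a) (hw : 0 < w) :
    IntegrableOn (fun s => powerLawDensity K a s * s) (Ioi w) :=
  (integrableOn_congr_fun (powerLawDensity_mul_self_eqOn hw) measurableSet_Ioi).mpr
    (integrableOn_powerLawDensity (by linarith) hw)

theorem integral_powerLawDensity_mul_self (ha : 1 < a) (hw : 0 < w) :
    ∫ s in Ioi w, powerLawDensity K a s * s = K * w ^ (1 - a) / (a - 1) := by
  rw [setIntegral_congr_fun measurableSet_Ioi (powerLawDensity_mul_self_eqOn hw),
    integral_powerLawDensity (by linarith) hw, neg_sub]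

theorem abs_powerLawDensity_mul_one_add_sub_le {s h b C : ℝ} (hs : 0 < s) (hK : 0 ≤ K)
    (hh : |h| ≤ C * s ^ (-b)) :
    |powerLawDensity K a s * (1 + h) - powerLawDensity K a s|
      ≤ powerLawDensity (K * C) (a + b) s := by
  have hp := powerLawDensity_nonneg (a := a) hK hs.le
  calc |powerLawDensity K a s * (1 + h) - powerLawDensity K a s|
      = powerLawDensity K a s * |h| := by
        rw [mul_one_add, add_sub_cancel_left, abs_mul, abs_of_nonneg hp]
    _ ≤ powerLawDensity K a s * (C * s ^ (-b)) := by gcongr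
    _ = powerLawDensity (K * C) (a + b) s := by
      rw [mul_left_comm, powerLawDensity_mul_rpow_neg hs, powerLawDensity, powerLawDensity]
      ring

end PowerLaw

theorem inv_mul_div_rpow_eq_powerLawDensity {ξ σ s : ℝ} (hσ : 0 < σ) (hs : 0 < s) :
    (ξ * σ)⁻¹ * (s / σ) ^ (-1 / ξ - 1) = powerLawDensity (σ ^ (1 / ξ) / ξ) (1 / ξ) s := by
  rw [powerLawDensity, Real.div_rpow hs.le hσ.le, neg_div, Real.rpow_sub hσ,
    Real.rpow_neg hσ.le, Real.rpow_one]
  field_simp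

theorem abs_div_sub_le_of_one_sub_le {I F F₀ m A B : ℝ} (hF₀ : 0 < F₀) (hF₀F : F₀ ≤ F)
    (hF : F ≤ 1) (hm : 0 ≤ m) (hI : |I - m| ≤ A) (hB : 1 - F ≤ B) :
    |I / F - m| ≤ (A + m * B) / F₀ := by
  have hF0 : 0 < F := hF₀.trans_le hF₀F
  have hnum : |I - m * F| ≤ A + m * B := calc
    |I - m * F| = |(I - m) + m * (1 - F)| := by ring_nf
    _ ≤ |I - m| + m * (1 - F) := by
      grw [abs_add_le, abs_of_nonneg (mul_nonneg hm (sub_nonneg.mpr hF))]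
    _ ≤ A + m * B := by gcongr
  calc |I / F - m| = |I - m * F| / F := by
        rw [div_sub' hF0.ne', abs_div, abs_of_pos hF0, mul_comm F]
    _ ≤ (A + m * B) / F₀ := div_le_div₀ ((abs_nonneg _).trans hnum) hnum hF₀ hF₀F

def IsNearPowerLawAbove (ν : Measure ℝ) (w₀ K a K' a' : ℝ) : Prop :=
  ∃ f : ℝ → ℝ,
    ν.restrict (Ioi w₀)
        = (volume.restrict (Ioi w₀)).withDensity (fun s => ENNReal.ofReal (f s)) ∧
      ∀ s > w₀, |f s - powerLawDensity K a s| ≤ powerLawDensity K' a' s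

namespace IsNearPowerLawAbove

variable {ν : Measure ℝ} {w₀ K a K' a' w : ℝ}

theorem abs_setIntegral_sub_le (hν : IsNearPowerLawAbove ν w₀ K a K' a') (hw₀ : 0 < w₀)
    (hK : 0 ≤ K) (hw : w₀ ≤ w) {g : ℝ → ℝ} (hg0 : ∀ s > w, 0 ≤ g s)
    (hpg : IntegrableOn (fun s => powerLawDensity K a s * g s) (Ioi w))
    (heg : IntegrableOn (fun s => powerLawDensity K' a' s * g s) (Ioi w)) :
    |∫ s in Ioi w, g s ∂ν - ∫ s in Ioi w, powerLawDensity K a s * g s|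
      ≤ ∫ s in Ioi w, powerLawDensity K' a' s * g s := by
  obtain ⟨f, hf, hfp⟩ := hν
  have hIoi : ∀ᵐ s ∂volume.restrict (Ioi w), w₀ < s :=
    ae_restrict_of_forall_mem measurableSet_Ioi fun s hs => hw.trans_lt hs
  rw [restrict_eq_withDensity_of_subset hf (Ioi_subset_Ioi hw) measurableSet_Ioi]
  exact abs_integral_withDensity_sub_le measurable_powerLawDensity measurable_powerLawDensity
    (hIoi.mono hfp) (hIoi.mono fun s hs => powerLawDensity_nonneg hK (hw₀.trans hs).le)
    (ae_restrict_of_forall_mem measurableSet_Ioi hg0) hpg heg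

theorem abs_setIntegral_id_sub_le (hν : IsNearPowerLawAbove ν w₀ K a K' a') (hw₀ : 0 < w₀)
    (hK : 0 ≤ K) (ha : 1 < a) (ha' : 1 < a') (hw : w₀ ≤ w) :
    |∫ s in Ioi w, s ∂ν - K * w ^ (1 - a) / (a - 1)| ≤ K' * w ^ (1 - a') / (a' - 1) := by
  have hw0 := hw₀.trans_le hw
  have := hν.abs_setIntegral_sub_le hw₀ hK hw (g := id) (fun s hs => (hw0.trans hs).le)
    (integrableOn_powerLawDensity_mul_self ha hw0)
    (integrableOn_powerLawDensity_mul_self ha' hw0)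
  simpa only [id, integral_powerLawDensity_mul_self ha hw0,
    integral_powerLawDensity_mul_self ha' hw0] using this

theorem measureReal_Ioi_le (hν : IsNearPowerLawAbove ν w₀ K a K' a') (hw₀ : 0 < w₀)
    (hK : 0 ≤ K) (hK' : 0 ≤ K') (ha : 0 < a) (haa' : a ≤ a') (hw : w₀ ≤ w) :
    ν.real (Ioi w) ≤ (K / a + K' * w₀ ^ (a - a') / a') * w ^ (-a) := by
  have hw0 := hw₀.trans_le hw
  have ha' := ha.trans_le haa'
  have := hν.abs_setIntegral_sub_le hw₀ hK hw (g := fun _ => 1) (fun _ _ => zero_le_one)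
    (by simpa using integrableOn_powerLawDensity ha hw0)
    (by simpa using integrableOn_powerLawDensity ha' hw0)
  simp only [mul_one, integral_powerLawDensity ha hw0, integral_powerLawDensity ha' hw0,
    setIntegral_const, smul_eq_mul] at this
  have hpow : w ^ (-a') ≤ w₀ ^ (a - a') * w ^ (-a) := by
    rw [show -a' = (a - a') + -a by ring, Real.rpow_add hw0]
    exact mul_le_mul_of_nonneg_right (Real.rpow_le_rpow_of_nonpos hw₀ hw (by linarith))
      (by positivity)
  calc ν.real (Ioi w) ≤ K * w ^ (-a) / a + K' * w ^ (-a') / a' := by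
        linarith [(abs_le.mp this).2]
    _ ≤ K * w ^ (-a) / a + K' * (w₀ ^ (a - a') * w ^ (-a)) / a' := by gcongr
    _ = (K / a + K' * w₀ ^ (a - a') / a') * w ^ (-a) := by ring

theorem abs_setIntegral_Ioi_div_sub_le [IsProbabilityMeasure ν]
    (hν : IsNearPowerLawAbove ν w₀ K a K' a') (hw₀ : 0 < w₀) (hK : 0 ≤ K) (hK' : 0 ≤ K')
    (ha : 1 < a) (haa' : a ≤ a') (hw : w₀ ≤ w) (hF₀ : 0 < ν.real (Iic w₀)) :
    |(∫ s in Ioi w, s ∂ν) / ν.real (Iic w) - K * w ^ (1 - a) / (a - 1)|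
      ≤ (K' * w ^ (1 - a') / (a' - 1)
          + K * w ^ (1 - a) / (a - 1) * ((K / a + K' * w₀ ^ (a - a') / a') * w ^ (-a)))
        / ν.real (Iic w₀) := by
  have hw0 := hw₀.trans_le hw
  refine abs_div_sub_le_of_one_sub_le hF₀ (measureReal_mono (Iic_subset_Iic.mpr hw))
    measureReal_le_one (div_nonneg (by positivity) (by linarith))
    (hν.abs_setIntegral_id_sub_le hw₀ hK ha (ha.trans_le haa') hw) ?_
  rw [← probReal_compl_eq_one_sub measurableSet_Iic, compl_Iic]
  exact hν.measureReal_Ioi_le hw₀ hK hK' (by linarith) haa' hw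

end IsNearPowerLawAbove

theorem truncated_mean_pareto_approximation_general
    {Ω : Type*} [MeasurableSpace Ω] (μ : Measure Ω) [IsProbabilityMeasure μ]
    (W : Ω → ℝ) (hW : Measurable W)
    (ξ σ δ w₀ C : ℝ) (hξ0 : 0 < ξ) (hξ2 : ξ < 1/2) (hσ : 0 < σ) (hδ : 0 < δ)
    (hC : 0 < C) (hw₀ : 0 < w₀)
    (h f : ℝ → ℝ)
    (hfform : ∀ w > w₀, f w = (ξ * σ)⁻¹ * (w / σ) ^ (-1/ξ - 1) * (1 + h w))
    (hhbd : ∀ w > w₀, |h w| ≤ C * w ^ (-δ/ξ))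
    (hdens : (μ.map W).restrict (Ioi w₀)
      = (volume.restrict (Ioi w₀)).withDensity (fun w => ENNReal.ofReal (f w)))
    (F : ℝ → ℝ) (hF : ∀ w, F w = (μ {ω | W ω ≤ w}).toReal) (hF0 : 0 < F w₀)
    (m mstar : ℝ → ℝ)
    (hm : ∀ w, m w = (∫ ω in {ω | w < W ω}, W ω ∂μ) / F w)
    (hmstar : ∀ w, mstar w = σ ^ (1/ξ) * w ^ (1 - 1/ξ) / (1 - ξ)) :
    ∃ C' : ℝ, 0 < C' ∧ ∀ w > w₀,
      |m w - mstar w| ≤ C' * (w ^ (1 - (1+δ)/ξ) + w ^ (1 - 2/ξ)) := by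
  have ha : 1 < 1 / ξ := by rw [lt_div_iff₀ hξ0]; linarith
  have haa' : 1 / ξ ≤ (1 + δ) / ξ := by gcongr; linarith
  set K := σ ^ (1 / ξ) / ξ with hK_def
  have hK : 0 < K := by positivity
  have hnear : IsNearPowerLawAbove (μ.map W) w₀ K (1 / ξ) (K * C) ((1 + δ) / ξ) :=
    ⟨f, hdens, fun s hs => by
      have hs0 := hw₀.trans hs
      rw [hfform s hs, inv_mul_div_rpow_eq_powerLawDensity hσ hs0, add_div]
      exact abs_powerLawDensity_mul_one_add_sub_le hs0 hK.le (neg_div ξ δ ▸ hhbd s hs)⟩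
  have hmstar' : ∀ w, mstar w = K * w ^ (1 - 1 / ξ) / (1 / ξ - 1) := fun w => by
    have : 1 - ξ ≠ 0 := by linarith
    rw [hmstar, hK_def]
    field_simp
  have hF' : ∀ w, F w = (μ.map W).real (Iic w) := fun w => by
    rw [hF, map_measureReal_apply hW measurableSet_Iic]
    rfl
  set c₁ := K * C / ((1 + δ) / ξ - 1)
  set c₂ := K / (1 / ξ) + K * C * w₀ ^ (1 / ξ - (1 + δ) / ξ) / ((1 + δ) / ξ)
  set c₃ := σ ^ (1 / ξ) / (1 - ξ) * c₂
  have hc₁ : 0 < c₁ := div_pos (by positivity) (by linarith)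
  have hc₃ : 0 < c₃ := mul_pos (div_pos (by positivity) (by linarith)) (by positivity)
  refine ⟨(c₁ + c₃) / F w₀, by positivity, fun w hw => ?_⟩
  have hw0 : 0 < w := hw₀.trans hw
  have := Measure.isProbabilityMeasure_map (μ := μ) hW.aemeasurable
  have hbound := hnear.abs_setIntegral_Ioi_div_sub_le hw₀ hK.le (by positivity) ha haa'
    hw.le (hF' w₀ ▸ hF0)
  rw [← hmstar', ← hF', ← hF'] at hbound
  rw [hm, show ∫ ω in {ω | w < W ω}, W ω ∂μ = ∫ s in Ioi w, s ∂μ.map W from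
    (setIntegral_map measurableSet_Ioi aestronglyMeasurable_id hW.aemeasurable).symm]
  calc _ ≤ _ := hbound
    _ = (c₁ * w ^ (1 - (1 + δ) / ξ) + c₃ * w ^ (1 - 2 / ξ)) / F w₀ := by
        rw [hmstar, show (1 : ℝ) - 2 / ξ = (1 - 1 / ξ) + -(1 / ξ) by ring, Real.rpow_add hw0]
        ring
    _ ≤ (c₁ + c₃) / F w₀ * (w ^ (1 - (1 + δ) / ξ) + w ^ (1 - 2 / ξ)) := by
        rw [div_mul_eq_mul_div (c₁ + c₃)]
        refine div_le_div_of_nonneg_right ?_ hF0.le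
        nlinarith [Real.rpow_pos_of_pos hw0 (1 - (1 + δ) / ξ),
          Real.rpow_pos_of_pos hw0 (1 - 2 / ξ)]

/-- Suppose the density of `W` for `w > w₀` equals
`f w = (ξσ)⁻¹ (w/σ)^(-1/ξ-1) (1 + h w)` with `|h w| ≤ C w^(-δ/ξ)` for some `δ > 0`
and `0 < ξ < 1/2`.  With `m(w) = E[W 1[W>w]]/F(w)` and
`m*(w) = σ^(1/ξ) w^(1-1/ξ)/(1-ξ)`, there is a constant `C'` such that
`|m(w) - m*(w)| ≤ C' (w^(1-(1+δ)/ξ) + w^(1-2/ξ))` uniformly in `w > w₀`. -/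
theorem truncated_mean_pareto_approximation
    {Ω : Type*} [MeasurableSpace Ω] (μ : Measure Ω) [IsProbabilityMeasure μ]
    (W : Ω → ℝ) (hW : Measurable W) (hWint : Integrable W μ)
    (ξ σ δ w₀ C : ℝ) (hξ0 : 0 < ξ) (hξ2 : ξ < 1/2) (hσ : 0 < σ) (hδ : 0 < δ)
    (hC : 0 < C) (hw₀ : 0 < w₀)
    (h f : ℝ → ℝ)
    (hfform : ∀ w > w₀, f w = (ξ * σ)⁻¹ * (w / σ) ^ (-1/ξ - 1) * (1 + h w))
    (hhbd : ∀ w > w₀, |h w| ≤ C * w ^ (-δ/ξ))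
    (hf0 : ∀ w, 0 ≤ f w)
    (hdens : (μ.map W).restrict (Ioi w₀)
      = (volume.restrict (Ioi w₀)).withDensity (fun w => ENNReal.ofReal (f w)))
    (F : ℝ → ℝ) (hF : ∀ w, F w = (μ {ω | W ω ≤ w}).toReal) (hF0 : 0 < F w₀)
    (m mstar : ℝ → ℝ)
    (hm : ∀ w, m w = (∫ ω in {ω | w < W ω}, W ω ∂μ) / F w)
    (hmstar : ∀ w, mstar w = σ ^ (1/ξ) * w ^ (1 - 1/ξ) / (1 - ξ)) :
    ∃ C' : ℝ, 0 < C' ∧ ∀ w > w₀,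
      |m w - mstar w| ≤ C' * (w ^ (1 - (1+δ)/ξ) + w ^ (1 - 2/ξ)) :=
  truncated_mean_pareto_approximation_general μ W hW ξ σ δ w₀ C hξ0 hξ2 hσ hδ hC hw₀ h f hfform hhbd
    hdens F hF hF0 m mstar hm hmstar
end

section
/- For k > 1 define r_k(ξ) = 3(1+k)(1-2ξ) / (2(1+k+2ξ)). Then for all ξ with (1+k)/(1+3k) < ξ < 1/2, it holds that r_k(ξ) > 1/(2ξ) - 1. -/
/-! Both rates carry the factor `1 - 2ξ > 0`. Cancelling it, the comparison
`1 / (2ξ) < 3(1+k) / (2(1+k+2ξ))` clears denominators to `1 + k < (1 + 3k) ξ`,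
which is exactly the lower bound on `ξ`. -/

lemma one_div_two_mul_lt_div_of_lt_mul {k ξ : ℝ} (hξ : 0 < ξ) (hk : 0 < 1 + k)
    (h : 1 + k < (1 + 3 * k) * ξ) :
    1 / (2 * ξ) < 3 * (1 + k) / (2 * (1 + k + 2 * ξ)) := by
  rw [div_lt_div_iff₀ (by positivity) (by positivity)]
  linarith

/-- For `k > 1` and `r_k(ξ) = 3(1+k)(1-2ξ)/(2(1+k+2ξ))`, for all
`ξ` with `(1+k)/(1+3k) < ξ < 1/2` it holds that `r_k(ξ) > 1/(2ξ) - 1`. -/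
theorem refinement_rate_beats_t_stat_rate (k : ℝ) (hk : 1 < k) (ξ : ℝ)
    (hξl : (1 + k) / (1 + 3 * k) < ξ) (hξu : ξ < 1/2) :
    3 * (1 + k) * (1 - 2 * ξ) / (2 * (1 + k + 2 * ξ)) > 1 / (2 * ξ) - 1 := by
  have hξ : 0 < ξ := (div_pos (by linarith) (by linarith)).trans hξl
  have hcross : 1 + k < (1 + 3 * k) * ξ := (div_lt_iff₀' (by linarith)).mp hξl
  calc 1 / (2 * ξ) - 1 = (1 - 2 * ξ) * (1 / (2 * ξ)) := by field_simp
    _ < (1 - 2 * ξ) * (3 * (1 + k) / (2 * (1 + k + 2 * ξ))) :=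
      mul_lt_mul_of_pos_left (one_div_two_mul_lt_div_of_lt_mul hξ (by linarith) hcross)
        (by linarith)
    _ = 3 * (1 + k) * (1 - 2 * ξ) / (2 * (1 + k + 2 * ξ)) := by ring
end
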